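/- arXiv:1905.06346 — 12 statements merged into one kernel-verified Lean document; each statement's English description precedes it below -/
import Mathlib

section
/- In any associative unital algebra, suppose A and B satisfy A² = 2A, B² = 2B, ABA = 2(AB+BA) − 3A − 4B + 6, and BAB = 2(AB+BA) − 4A − 3B + 6. Define G = AB + BA − 2A − 2B + 4. Then G commutes with both A and B. -/
theorem racah_TL_G_central {R : Type*} [Ring R] [Algebra ℚ R] (A B : R)
    (hA : A * A = 2 * A) (hB : B * B = 2 * B)
    (hABA : A * B * A = 2 * (A * B + B * A) - 3 * A - 4 * B + 6)
    (hBAB : B * A * B = 2 * (A * B + B * A) - 4 * A - 3 * B + 6) :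
    (A * B + B * A - 2 * A - 2 * B + 4) * A = A * (A * B + B * A - 2 * A - 2 * B + 4) ∧
    (A * B + B * A - 2 * A - 2 * B + 4) * B = B * (A * B + B * A - 2 * A - 2 * B + 4) := by
  constructor
  · calc (A * B + B * A - 2 * A - 2 * B + 4) * A
        = A * B * A + B * (A * A) - 2 * (A * A) - 2 * (B * A) + 4 * A := by noncomm_ring
      _ = A * B * A + B * (2 * A) - 2 * (2 * A) - 2 * (B * A) + 4 * A := by rw [hA]
      _ = (A * A) * B + A * B * A - 2 * (A * A) - 2 * (A * B) + 4 * A := by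
            rw [hA]; noncomm_ring
      _ = A * (A * B + B * A - 2 * A - 2 * B + 4) := by noncomm_ring
  · calc (A * B + B * A - 2 * A - 2 * B + 4) * B
        = A * (B * B) + B * A * B - 2 * (A * B) - 2 * (B * B) + 4 * B := by noncomm_ring
      _ = A * (2 * B) + B * A * B - 2 * (A * B) - 2 * (2 * B) + 4 * B := by rw [hB]
      _ = B * A * B + (B * B) * A - 2 * (B * A) - 2 * (B * B) + 4 * B := by
            rw [hB]; noncomm_ring
      _ = B * (A * B + B * A - 2 * A - 2 * B + 4) := by noncomm_ring
end

section
/- In any associative unital algebra over ℚ, suppose A and B satisfy A² = 2A, B² = 2B, ABA = 2(AB+BA) − 3A − 4B + 6, and BAB = 2(AB+BA) − 4A − 3B + 6. Define G = AB + BA − 2A − 2B + 4. Then (G − 1)(G − 4) = 0. -/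
theorem racah_TL_G_quadratic {R : Type*} [Ring R] [Algebra ℚ R] (A B : R)
    (hA : A * A = 2 * A) (hB : B * B = 2 * B)
    (hABA : A * B * A = 2 * (A * B + B * A) - 3 * A - 4 * B + 6)
    (hBAB : B * A * B = 2 * (A * B + B * A) - 4 * A - 3 * B + 6) :
    (A * B + B * A - 2 * A - 2 * B + 4 - 1) * (A * B + B * A - 2 * A - 2 * B + 4 - 4) = 0 := by
  have q1 : A * B * (A * B) = 5 * (A * B) + 4 * (B * A) - 8 * A - 8 * B + 12 := by
    calc A * B * (A * B) = A * B * A * B := by noncomm_ring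
      _ = (2 * (A * B + B * A) - 3 * A - 4 * B + 6) * B := by rw [hABA]
      _ = 2 * (B * A * B) + 2 * (A * (B * B)) - 3 * (A * B) - 4 * (B * B) + 6 * B := by
          noncomm_ring
      _ = 5 * (A * B) + 4 * (B * A) - 8 * A - 8 * B + 12 := by rw [hBAB, hB]; noncomm_ring; norm_num
  have q2 : A * B * (B * A) = 4 * (A * B) + 4 * (B * A) - 6 * A - 8 * B + 12 := by
    calc A * B * (B * A) = A * (B * B) * A := by noncomm_ring
      _ = A * (2 * B) * A := by rw [hB]
      _ = 2 * (A * B * A) := by noncomm_ring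
      _ = 4 * (A * B) + 4 * (B * A) - 6 * A - 8 * B + 12 := by rw [hABA]; noncomm_ring; norm_num
  have q3 : B * A * (A * B) = 4 * (A * B) + 4 * (B * A) - 8 * A - 6 * B + 12 := by
    calc B * A * (A * B) = B * (A * A) * B := by noncomm_ring
      _ = B * (2 * A) * B := by rw [hA]
      _ = 2 * (B * A * B) := by noncomm_ring
      _ = 4 * (A * B) + 4 * (B * A) - 8 * A - 6 * B + 12 := by rw [hBAB]; noncomm_ring; norm_num
  have q4 : B * A * (B * A) = 4 * (A * B) + 5 * (B * A) - 8 * A - 8 * B + 12 := by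
    calc B * A * (B * A) = B * A * B * A := by noncomm_ring
      _ = (2 * (A * B + B * A) - 4 * A - 3 * B + 6) * A := by rw [hBAB]
      _ = 2 * (A * B * A) + 2 * (B * (A * A)) - 4 * (A * A) - 3 * (B * A) + 6 * A := by
          noncomm_ring
      _ = 4 * (A * B) + 5 * (B * A) - 8 * A - 8 * B + 12 := by rw [hABA, hA]; noncomm_ring; norm_num
  calc (A * B + B * A - 2 * A - 2 * B + 4 - 1) * (A * B + B * A - 2 * A - 2 * B + 4 - 4)
      = A * B * (A * B) + A * B * (B * A) + B * A * (A * B) + B * A * (B * A)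
        - 2 * (A * A * B) - 2 * (A * (B * B)) - 2 * (B * (A * A)) - 2 * (B * B * A)
        - 4 * (A * B * A) - 4 * (B * A * B)
        + 4 * (A * A) + 4 * (B * B) + 7 * (A * B) + 7 * (B * A) - 6 * A - 6 * B := by
        noncomm_ring
    _ = 0 := by rw [q1, q2, q3, q4, hABA, hBAB, hA, hB]; noncomm_ring; norm_num
end

section
/- In any associative unital algebra over ℚ, suppose A and B satisfy A² = 2A, B² = 2B, ABA = 2(AB+BA) − 3A − 4B + 6, and BAB = 2(AB+BA) − 4A − 3B + 6. Then the subalgebra generated by A and B is spanned (as a vector space) by the five elements 1, A, B, AB, BA; in particular its dimension is at most 5. -/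
theorem racah_TL_span {R : Type*} [Ring R] [Algebra ℚ R] (A B : R)
    (hA : A * A = 2 * A) (hB : B * B = 2 * B)
    (hABA : A * B * A = 2 * (A * B + B * A) - 3 * A - 4 * B + 6)
    (hBAB : B * A * B = 2 * (A * B + B * A) - 4 * A - 3 * B + 6) :
    Subalgebra.toSubmodule (Algebra.adjoin ℚ {A, B})
      ≤ Submodule.span ℚ ({1, A, B, A * B, B * A} : Set R) ∧
    Module.rank ℚ (Algebra.adjoin ℚ {A, B} : Subalgebra ℚ R) ≤ 5 := by
  set s : Set R := {1, A, B, A * B, B * A} with hs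
  set S : Submodule ℚ R := Submodule.span ℚ s with hSdef
  have m1 : (1 : R) ∈ S := Submodule.subset_span (by simp [hs])
  have mA : A ∈ S := Submodule.subset_span (by simp [hs])
  have mB : B ∈ S := Submodule.subset_span (by simp [hs])
  have mAB : A * B ∈ S := Submodule.subset_span (by simp [hs])
  have mBA : B * A ∈ S := Submodule.subset_span (by simp [hs])
  have hnat : ∀ (n : ℕ) (x : R), x ∈ S → (n : R) * x ∈ S := by
    intro n x hx
    rw [← nsmul_eq_mul]
    exact nsmul_mem hx n
  have hcomb : 2 * (A * B + B * A) - 3 * A - 4 * B + 6 ∈ S := by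
    have h6 : (6 : R) = (6 : ℕ) * 1 := by norm_num
    refine add_mem (sub_mem (sub_mem ?_ ?_) ?_) ?_
    · exact hnat 2 _ (add_mem mAB mBA)
    · exact hnat 3 _ mA
    · exact hnat 4 _ mB
    · rw [h6]; exact hnat 6 _ m1
  have hcomb' : 2 * (A * B + B * A) - 4 * A - 3 * B + 6 ∈ S := by
    have h6 : (6 : R) = (6 : ℕ) * 1 := by norm_num
    refine add_mem (sub_mem (sub_mem ?_ ?_) ?_) ?_
    · exact hnat 2 _ (add_mem mAB mBA)
    · exact hnat 4 _ mA
    · exact hnat 3 _ mB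
    · rw [h6]; exact hnat 6 _ m1
  -- left multiplication by A preserves S
  have hAmul : ∀ x ∈ S, A * x ∈ S := by
    intro x hx
    induction hx using Submodule.span_induction with
    | mem y hy =>
      rcases hy with rfl | rfl | rfl | rfl | rfl
      · simpa using mA
      · rw [hA]; exact hnat 2 _ mA
      · exact mAB
      · rw [← mul_assoc, hA, mul_assoc]; exact hnat 2 _ mAB
      · rw [← mul_assoc, hABA]; exact hcomb
    | zero => simpa using S.zero_mem
    | add y z _ _ hy hz => rw [mul_add]; exact add_mem hy hz
    | smul c y _ hy => rw [mul_smul_comm]; exact S.smul_mem c hy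
  have hBmul : ∀ x ∈ S, B * x ∈ S := by
    intro x hx
    induction hx using Submodule.span_induction with
    | mem y hy =>
      rcases hy with rfl | rfl | rfl | rfl | rfl
      · simpa using mB
      · exact mBA
      · rw [hB]; exact hnat 2 _ mB
      · rw [← mul_assoc, hBAB]; exact hcomb'
      · rw [← mul_assoc, hB, mul_assoc]; exact hnat 2 _ mBA
    | zero => simpa using S.zero_mem
    | add y z _ _ hy hz => rw [mul_add]; exact add_mem hy hz
    | smul c y _ hy => rw [mul_smul_comm]; exact S.smul_mem c hy
  have hmul : ∀ x y, x ∈ S → y ∈ S → x * y ∈ S := by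
    intro x y hx hy
    induction hx using Submodule.span_induction with
    | mem z hz =>
      rcases hz with rfl | rfl | rfl | rfl | rfl
      · simpa using hy
      · exact hAmul y hy
      · exact hBmul y hy
      · rw [mul_assoc]; exact hAmul _ (hBmul y hy)
      · rw [mul_assoc]; exact hBmul _ (hAmul y hy)
    | zero => simpa using S.zero_mem
    | add a b _ _ ha hb => rw [add_mul]; exact add_mem ha hb
    | smul c a _ ha => rw [smul_mul_assoc]; exact S.smul_mem c ha
  have hle : Subalgebra.toSubmodule (Algebra.adjoin ℚ {A, B}) ≤ S := by
    have hadj : Algebra.adjoin ℚ {A, B} ≤ S.toSubalgebra m1 hmul := by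
      apply Algebra.adjoin_le
      intro x hx
      rcases hx with rfl | rfl
      · exact mA
      · exact mB
    intro x hx
    exact hadj hx
  refine ⟨hle, ?_⟩
  have h1 : Module.rank ℚ (Algebra.adjoin ℚ {A, B} : Subalgebra ℚ R)
      ≤ Module.rank ℚ S := Submodule.rank_mono hle
  have h2 : Module.rank ℚ S ≤ Cardinal.mk s := rank_span_le s
  have h3 : Cardinal.mk s ≤ 5 := by
    have hsub : s ⊆ Set.range (![1, A, B, A * B, B * A] : Fin 5 → R) := by
      intro x hx
      rcases hx with rfl | rfl | rfl | rfl | rfl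
      · exact ⟨0, rfl⟩
      · exact ⟨1, rfl⟩
      · exact ⟨2, rfl⟩
      · exact ⟨3, rfl⟩
      · exact ⟨4, rfl⟩
    have h4 := Cardinal.mk_range_le_lift (f := (![1, A, B, A * B, B * A] : Fin 5 → R))
    simp at h4
    have hseq : s = ({B * A, A * B, B, A, 1} : Set R) := by
      ext x; constructor <;> (intro h; rcases h with rfl|rfl|rfl|rfl|rfl <;> simp [hs])
    rw [hseq]; exact h4
  exact h1.trans (h2.trans h3)
end

section
/- In the Brauer algebra B₃(3) (generators s₁, s₂, e₁, e₂ with relations s₁²=1, s₂²=1, e₁²=3e₁, e₂²=3e₂, s₁e₁=e₁s₁=e₁, s₂e₂=e₂s₂=e₂, s₁s₂s₁=s₂s₁s₂, e₁e₂e₁=e₁, e₂e₁e₂=e₂, s₁e₂e₁=s₂e₁, e₂e₁s₂=e₂s₁), set A = 2(s₁−e₁)+4 and B = 2(s₂−e₂)+4. Then the element C := 6 − 7A − B + A² + (AB+BA) + (1/4)(ABA − A²B − BA²) equals 6 + 2(s₁−e₁) + 2(s₂−e₂) + 2s₁(s₂−e₂)s₁, and C commutes with both A and B. -/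
set_option maxRecDepth 10000
set_option maxHeartbeats 2000000

private lemma brauer_lit {R : Type*} [Ring R] (n : ℕ) [n.AtLeastTwo] :
    (no_index (OfNat.ofNat n) : R) = (OfNat.ofNat n : ℕ) • (1 : R) := by
  rw [nsmul_eq_mul, mul_one, Nat.cast_ofNat]

private lemma brauer_assoc3 {R : Type*} [Ring R] (a b c w : R) :
    a*(b*(c*w)) = (a*(b*c))*w := by rw [mul_assoc, mul_assoc]

theorem brauer_central_element {R : Type*} [Ring R] [Algebra ℚ R] (s₁ s₂ e₁ e₂ : R)
    (hs1 : s₁ * s₁ = 1) (hs2 : s₂ * s₂ = 1)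
    (he1 : e₁ * e₁ = 3 * e₁) (he2 : e₂ * e₂ = 3 * e₂)
    (hse1 : s₁ * e₁ = e₁) (hes1 : e₁ * s₁ = e₁)
    (hse2 : s₂ * e₂ = e₂) (hes2 : e₂ * s₂ = e₂)
    (hbraid : s₁ * s₂ * s₁ = s₂ * s₁ * s₂)
    (he121 : e₁ * e₂ * e₁ = e₁) (he212 : e₂ * e₁ * e₂ = e₂)
    (hmix1 : s₁ * e₂ * e₁ = s₂ * e₁) (hmix2 : e₂ * e₁ * s₂ = e₂ * s₁)
    (A B : R) (hA : A = 2 * (s₁ - e₁) + 4) (hB : B = 2 * (s₂ - e₂) + 4)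
    (C : R)
    (hC : C = 6 - 7 * A - B + A * A + (A * B + B * A)
      + (1 / 4 : ℚ) • (A * B * A - A * A * B - B * A * A)) :
    C = 6 + 2 * (s₁ - e₁) + 2 * (s₂ - e₂) + 2 * (s₁ * (s₂ - e₂) * s₁) ∧
    C * A = A * C ∧ C * B = B * C := by
  -- numeral commuting lemmas
  have nc2 : ∀ x y : R, x*(2*y) = 2*(x*y) := fun x y => by noncomm_ring
  have nc3 : ∀ x y : R, x*(3*y) = 3*(x*y) := fun x y => by noncomm_ring
  have nc4 : ∀ x y : R, x*(4*y) = 4*(x*y) := fun x y => by noncomm_ring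
  have nc2' : ∀ x : R, x*2 = 2*x := fun x => by noncomm_ring
  have nc3' : ∀ x : R, x*3 = 3*x := fun x => by noncomm_ring
  have nc4' : ∀ x : R, x*4 = 4*x := fun x => by noncomm_ring
  have ncL2_1 : ∀ y : R, s₁*(2*y) = 2*(s₁*y) := fun y => nc2 s₁ y
  have ncR2_1 : s₁*2 = 2*s₁ := nc2' s₁
  have ncL3_1 : ∀ y : R, s₁*(3*y) = 3*(s₁*y) := fun y => nc3 s₁ y
  have ncR3_1 : s₁*3 = 3*s₁ := nc3' s₁
  have ncL4_1 : ∀ y : R, s₁*(4*y) = 4*(s₁*y) := fun y => nc4 s₁ y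
  have ncR4_1 : s₁*4 = 4*s₁ := nc4' s₁
  have ncL2_2 : ∀ y : R, s₂*(2*y) = 2*(s₂*y) := fun y => nc2 s₂ y
  have ncR2_2 : s₂*2 = 2*s₂ := nc2' s₂
  have ncL3_2 : ∀ y : R, s₂*(3*y) = 3*(s₂*y) := fun y => nc3 s₂ y
  have ncR3_2 : s₂*3 = 3*s₂ := nc3' s₂
  have ncL4_2 : ∀ y : R, s₂*(4*y) = 4*(s₂*y) := fun y => nc4 s₂ y
  have ncR4_2 : s₂*4 = 4*s₂ := nc4' s₂
  have ncL2_3 : ∀ y : R, e₁*(2*y) = 2*(e₁*y) := fun y => nc2 e₁ y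
  have ncR2_3 : e₁*2 = 2*e₁ := nc2' e₁
  have ncL3_3 : ∀ y : R, e₁*(3*y) = 3*(e₁*y) := fun y => nc3 e₁ y
  have ncR3_3 : e₁*3 = 3*e₁ := nc3' e₁
  have ncL4_3 : ∀ y : R, e₁*(4*y) = 4*(e₁*y) := fun y => nc4 e₁ y
  have ncR4_3 : e₁*4 = 4*e₁ := nc4' e₁
  have ncL2_4 : ∀ y : R, e₂*(2*y) = 2*(e₂*y) := fun y => nc2 e₂ y
  have ncR2_4 : e₂*2 = 2*e₂ := nc2' e₂
  have ncL3_4 : ∀ y : R, e₂*(3*y) = 3*(e₂*y) := fun y => nc3 e₂ y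
  have ncR3_4 : e₂*3 = 3*e₂ := nc3' e₂
  have ncL4_4 : ∀ y : R, e₂*(4*y) = 4*(e₂*y) := fun y => nc4 e₂ y
  have ncR4_4 : e₂*4 = 4*e₂ := nc4' e₂
  -- right-associated forms of given relations
  have hbraid' : s₂*(s₁*s₂) = s₁*(s₂*s₁) := by
    rw [← mul_assoc, ← mul_assoc, ← hbraid]
  have he121' : e₁*(e₂*e₁) = e₁ := by rw [← mul_assoc, he121]
  have he212' : e₂*(e₁*e₂) = e₂ := by rw [← mul_assoc, he212]
  have hmix1' : s₁*(e₂*e₁) = s₂*e₁ := by rw [← mul_assoc, hmix1]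
  have hmix2' : e₂*(e₁*s₂) = e₂*s₁ := by rw [← mul_assoc, hmix2]
  -- derived relations
  have d1 : s₁*(s₂*e₁) = e₂*e₁ := by
    rw [← hmix1', ← mul_assoc, hs1, one_mul]
  have d2 : e₂*(s₁*s₂) = e₂*e₁ := by
    calc e₂*(s₁*s₂) = (e₂*s₁)*s₂ := (mul_assoc _ _ _).symm
    _ = (e₂*e₁*s₂)*s₂ := by rw [hmix2]
    _ = e₂*e₁*(s₂*s₂) := mul_assoc _ _ _
    _ = e₂*e₁ := by rw [hs2, mul_one]
  have d3 : e₁*(e₂*s₁) = e₁*s₂ := by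
    rw [← hmix2, ← mul_assoc, he121']
  have d4 : e₁*(s₂*s₁) = e₁*e₂ := by
    calc e₁*(s₂*s₁) = (e₁*s₂)*s₁ := (mul_assoc _ _ _).symm
    _ = (e₁*(e₂*s₁))*s₁ := by rw [d3]
    _ = e₁*(e₂*(s₁*s₁)) := by rw [mul_assoc, mul_assoc]
    _ = e₁*e₂ := by rw [hs1, mul_one]
  have d5 : s₂*(e₁*e₂) = s₁*e₂ := by
    calc s₂*(e₁*e₂) = (s₂*e₁)*e₂ := (mul_assoc _ _ _).symm
    _ = (s₁*e₂*e₁)*e₂ := by rw [← hmix1]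
    _ = s₁*(e₂*(e₁*e₂)) := by rw [mul_assoc, mul_assoc]
    _ = s₁*e₂ := by rw [he212']
  have d6 : e₂*(s₁*e₂) = e₂ := by
    calc e₂*(s₁*e₂) = (e₂*s₁)*e₂ := (mul_assoc _ _ _).symm
    _ = (e₂*e₁*s₂)*e₂ := by rw [hmix2]
    _ = e₂*(e₁*(s₂*e₂)) := by rw [mul_assoc, mul_assoc]
    _ = e₂ := by rw [hse2, he212']
  have d7 : e₁*(s₂*e₁) = e₁ := by
    calc e₁*(s₂*e₁) = (e₁*s₂)*e₁ := (mul_assoc _ _ _).symm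
    _ = (e₁*(e₂*s₁))*e₁ := by rw [d3]
    _ = e₁*(e₂*(s₁*e₁)) := by rw [mul_assoc, mul_assoc]
    _ = e₁ := by rw [hse1, he121']
  have d8 : s₂*(s₁*e₂) = e₁*e₂ := by
    calc s₂*(s₁*e₂) = s₂*(s₂*(e₁*e₂)) := by rw [d5]
    _ = (s₂*s₂)*(e₁*e₂) := (mul_assoc _ _ _).symm
    _ = e₁*e₂ := by rw [hs2, one_mul]
  have d9 : s₂*(e₁*s₂) = s₁*(e₂*s₁) := by
    calc s₂*(e₁*s₂) = s₂*(e₁*(e₂*s₁)) := by rw [d3]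
    _ = (s₂*(e₁*e₂))*s₁ := brauer_assoc3 _ _ _ _
    _ = (s₁*e₂)*s₁ := by rw [d5]
    _ = s₁*(e₂*s₁) := mul_assoc _ _ _
  -- w-forms of pair relations
  have w_s1 : ∀ w : R, s₁*(s₁*w) = w := fun w => by rw [← mul_assoc, hs1, one_mul]
  have w_s2 : ∀ w : R, s₂*(s₂*w) = w := fun w => by rw [← mul_assoc, hs2, one_mul]
  have w_e1 : ∀ w : R, e₁*(e₁*w) = 3*(e₁*w) := fun w => by rw [← mul_assoc, he1, mul_assoc]
  have w_e2 : ∀ w : R, e₂*(e₂*w) = 3*(e₂*w) := fun w => by rw [← mul_assoc, he2, mul_assoc]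
  have w_se1 : ∀ w : R, s₁*(e₁*w) = e₁*w := fun w => by rw [← mul_assoc, hse1]
  have w_es1 : ∀ w : R, e₁*(s₁*w) = e₁*w := fun w => by rw [← mul_assoc, hes1]
  have w_se2 : ∀ w : R, s₂*(e₂*w) = e₂*w := fun w => by rw [← mul_assoc, hse2]
  have w_es2 : ∀ w : R, e₂*(s₂*w) = e₂*w := fun w => by rw [← mul_assoc, hes2]
  -- w-forms of triple relations
  have w_braid : ∀ w : R, s₂*(s₁*(s₂*w)) = s₁*(s₂*(s₁*w)) := fun w => by
    rw [brauer_assoc3, hbraid', mul_assoc, mul_assoc]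
  have w_121 : ∀ w : R, e₁*(e₂*(e₁*w)) = e₁*w := fun w => by
    rw [brauer_assoc3, he121']
  have w_212 : ∀ w : R, e₂*(e₁*(e₂*w)) = e₂*w := fun w => by
    rw [brauer_assoc3, he212']
  have w_m1 : ∀ w : R, s₁*(e₂*(e₁*w)) = s₂*(e₁*w) := fun w => by
    rw [brauer_assoc3, hmix1', mul_assoc]
  have w_m2 : ∀ w : R, e₂*(e₁*(s₂*w)) = e₂*(s₁*w) := fun w => by
    rw [brauer_assoc3, hmix2', mul_assoc]
  have w_d1 : ∀ w : R, s₁*(s₂*(e₁*w)) = e₂*(e₁*w) := fun w => by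
    rw [brauer_assoc3, d1, mul_assoc]
  have w_d2 : ∀ w : R, e₂*(s₁*(s₂*w)) = e₂*(e₁*w) := fun w => by
    rw [brauer_assoc3, d2, mul_assoc]
  have w_d3 : ∀ w : R, e₁*(e₂*(s₁*w)) = e₁*(s₂*w) := fun w => by
    rw [brauer_assoc3, d3, mul_assoc]
  have w_d4 : ∀ w : R, e₁*(s₂*(s₁*w)) = e₁*(e₂*w) := fun w => by
    rw [brauer_assoc3, d4, mul_assoc]
  have w_d5 : ∀ w : R, s₂*(e₁*(e₂*w)) = s₁*(e₂*w) := fun w => by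
    rw [brauer_assoc3, d5, mul_assoc]
  have w_d6 : ∀ w : R, e₂*(s₁*(e₂*w)) = e₂*w := fun w => by
    rw [brauer_assoc3, d6]
  have w_d7 : ∀ w : R, e₁*(s₂*(e₁*w)) = e₁*w := fun w => by
    rw [brauer_assoc3, d7]
  have w_d8 : ∀ w : R, s₂*(s₁*(e₂*w)) = e₁*(e₂*w) := fun w => by
    rw [brauer_assoc3, d8, mul_assoc]
  have w_d9 : ∀ w : R, s₂*(e₁*(s₂*w)) = s₁*(e₂*(s₁*w)) := fun w => by
    rw [brauer_assoc3, d9, mul_assoc, mul_assoc]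
  -- the cubic part is 4 * Y
  have hX : A*B*A - A*A*B - B*A*A =
      4 * (2*(s₁*(s₂*s₁)) - 2*(s₁*(e₂*s₁)) - 4*(e₂*e₁) - 4*(s₁*s₂) + 4*(s₂*e₁)
        + 4*(s₁*e₂) + 4*(e₁*s₂) + 4*(e₂*s₁) - 4*(e₁*e₂) - 4*(s₂*s₁)
        - 16*s₁ - 12*s₂ + 12*e₁ + 12*e₂ - 20) := by
    rw [hA, hB]
    simp only [mul_add, add_mul, mul_sub, sub_mul, mul_assoc, mul_one, one_mul,
      ncL2_1, ncR2_1, ncL3_1, ncR3_1, ncL4_1, ncR4_1, ncL2_2, ncR2_2, ncL3_2, ncR3_2, ncL4_2, ncR4_2,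
      ncL2_3, ncR2_3, ncL3_3, ncR3_3, ncL4_3, ncR4_3, ncL2_4, ncR2_4, ncL3_4, ncR3_4, ncL4_4, ncR4_4,
      hs1, hs2, he1, he2, hse1, hes1, hse2, hes2,
      hbraid', he121', he212', hmix1', hmix2', d1, d2, d3, d4, d5, d6, d7, d8, d9,
      w_s1, w_s2, w_e1, w_e2, w_se1, w_es1, w_se2, w_es2,
      w_braid, w_121, w_212, w_m1, w_m2,
      w_d1, w_d2, w_d3, w_d4, w_d5, w_d6, w_d7, w_d8, w_d9]
    noncomm_ring [brauer_lit]
  have h4 : ∀ y : R, (4:R) * y = (4:ℚ) • y := fun y => by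
    rw [Algebra.smul_def, map_ofNat]
  have hC' : C = 6 - 7 * A - B + A * A + (A * B + B * A)
      + (2*(s₁*(s₂*s₁)) - 2*(s₁*(e₂*s₁)) - 4*(e₂*e₁) - 4*(s₁*s₂) + 4*(s₂*e₁)
        + 4*(s₁*e₂) + 4*(e₁*s₂) + 4*(e₂*s₁) - 4*(e₁*e₂) - 4*(s₂*s₁)
        - 16*s₁ - 12*s₂ + 12*e₁ + 12*e₂ - 20) := by
    rw [hC, hX, h4, smul_smul, show (1/4*4 : ℚ) = 1 by norm_num, one_smul]
  have part1 : C = 6 + 2 * (s₁ - e₁) + 2 * (s₂ - e₂) + 2 * (s₁ * (s₂ - e₂) * s₁) := by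
    rw [hC', hA, hB]
    simp only [mul_add, add_mul, mul_sub, sub_mul, mul_assoc, mul_one, one_mul,
      ncL2_1, ncR2_1, ncL3_1, ncR3_1, ncL4_1, ncR4_1, ncL2_2, ncR2_2, ncL3_2, ncR3_2, ncL4_2, ncR4_2,
      ncL2_3, ncR2_3, ncL3_3, ncR3_3, ncL4_3, ncR4_3, ncL2_4, ncR2_4, ncL3_4, ncR3_4, ncL4_4, ncR4_4,
      hs1, hs2, he1, he2, hse1, hes1, hse2, hes2,
      hbraid', he121', he212', hmix1', hmix2', d1, d2, d3, d4, d5, d6, d7, d8, d9,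
      w_s1, w_s2, w_e1, w_e2, w_se1, w_es1, w_se2, w_es2,
      w_braid, w_121, w_212, w_m1, w_m2,
      w_d1, w_d2, w_d3, w_d4, w_d5, w_d6, w_d7, w_d8, w_d9]
    noncomm_ring [brauer_lit]
  refine ⟨part1, ?_, ?_⟩
  · rw [part1, hA]
    simp only [mul_add, add_mul, mul_sub, sub_mul, mul_assoc, mul_one, one_mul,
      ncL2_1, ncR2_1, ncL3_1, ncR3_1, ncL4_1, ncR4_1, ncL2_2, ncR2_2, ncL3_2, ncR3_2, ncL4_2, ncR4_2,
      ncL2_3, ncR2_3, ncL3_3, ncR3_3, ncL4_3, ncR4_3, ncL2_4, ncR2_4, ncL3_4, ncR3_4, ncL4_4, ncR4_4,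
      hs1, hs2, he1, he2, hse1, hes1, hse2, hes2,
      hbraid', he121', he212', hmix1', hmix2', d1, d2, d3, d4, d5, d6, d7, d8, d9,
      w_s1, w_s2, w_e1, w_e2, w_se1, w_es1, w_se2, w_es2,
      w_braid, w_121, w_212, w_m1, w_m2,
      w_d1, w_d2, w_d3, w_d4, w_d5, w_d6, w_d7, w_d8, w_d9]
    noncomm_ring [brauer_lit]
  · rw [part1, hB]
    simp only [mul_add, add_mul, mul_sub, sub_mul, mul_assoc, mul_one, one_mul,
      ncL2_1, ncR2_1, ncL3_1, ncR3_1, ncL4_1, ncR4_1, ncL2_2, ncR2_2, ncL3_2, ncR3_2, ncL4_2, ncR4_2,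
      ncL2_3, ncR2_3, ncL3_3, ncR3_3, ncL4_3, ncR4_3, ncL2_4, ncR2_4, ncL3_4, ncR3_4, ncL4_4, ncR4_4,
      hs1, hs2, he1, he2, hse1, hes1, hse2, hes2,
      hbraid', he121', he212', hmix1', hmix2', d1, d2, d3, d4, d5, d6, d7, d8, d9,
      w_s1, w_s2, w_e1, w_e2, w_se1, w_es1, w_se2, w_es2,
      w_braid, w_121, w_212, w_m1, w_m2,
      w_d1, w_d2, w_d3, w_d4, w_d5, w_d6, w_d7, w_d8, w_d9]
    noncomm_ring [brauer_lit]
end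

section
/- Let z be a scalar with z ≠ 0. In any associative unital algebra over ℚ(z) (or over ℚ with z a fixed nonzero rational), suppose 𝒜 and ℬ satisfy 𝒜² = z𝒜, ℬ² = 2ℬ, and ℬ𝒜ℬ = ℬ. Define G = zℬ + 2𝒜 − (𝒜ℬ + ℬ𝒜). Then G commutes with both 𝒜 and ℬ, and moreover Gℬ = (2z−1)ℬ and G𝒜 = 2z𝒜 − 𝒜ℬ𝒜. -/
theorem btl_G_central {K : Type*} [Field K] [CharZero K]
    {R : Type*} [Ring R] [Algebra K R] (z : K) (hz : z ≠ 0) (A B : R)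
    (hA : A * A = z • A) (hB : B * B = 2 * B) (hBAB : B * A * B = B) :
    ((z • B + 2 * A - (A * B + B * A)) * A = A * (z • B + 2 * A - (A * B + B * A)) ∧
     (z • B + 2 * A - (A * B + B * A)) * B = B * (z • B + 2 * A - (A * B + B * A))) ∧
    (z • B + 2 * A - (A * B + B * A)) * B = (2 * z - 1) • B ∧
    (z • B + 2 * A - (A * B + B * A)) * A = (2 * z) • A - A * B * A := by
  have h2 : ∀ x : R, ((2:K) * z) • x = z • (2 * x) := by
    intro x
    rw [mul_comm, mul_smul, two_smul, two_mul, smul_add]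
  have h2' : ∀ x : R, (2:R) * (z • x) = ((2:K) * z) • x := by
    intro x
    rw [h2, two_mul, two_mul, smul_add]
  have hBAA : B * A * A = z • (B * A) := by rw [mul_assoc, hA, mul_smul_comm]
  have hAAB : A * A * B = z • (A * B) := by rw [hA, smul_mul_assoc]
  have hABB : A * (B * B) = 2 * (A * B) := by
    rw [hB, two_mul, two_mul, mul_add]
  have hBBA : B * B * A = 2 * (B * A) := by
    rw [hB, two_mul, two_mul, add_mul]
  have hGB : (z • B + 2 * A - (A * B + B * A)) * B = (2 * z - 1) • B := by
    rw [sub_mul, add_mul, add_mul, smul_mul_assoc, hB, mul_assoc A B B, hABB,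
      mul_assoc 2 A B, hBAB, sub_smul, h2, one_smul]
    abel
  have hGA : (z • B + 2 * A - (A * B + B * A)) * A = (2 * z) • A - A * B * A := by
    rw [sub_mul, add_mul, add_mul, smul_mul_assoc, mul_assoc 2 A A, hA, hBAA,
      mul_assoc A B A, h2' A]
    abel
  have hmul2 : ∀ x y : R, x * (2 * y) = 2 * (x * y) := by
    intro x y; rw [two_mul, mul_add, ← two_mul]
  refine ⟨⟨?_, ?_⟩, hGB, hGA⟩
  · rw [hGA, mul_sub, mul_add, mul_add, mul_smul_comm, hmul2 A A, hA, h2' A,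
      ← mul_assoc A A B, hAAB, ← mul_assoc A B A]
    abel
  · rw [hGB, mul_sub, mul_add, mul_add, mul_smul_comm, hB, ← mul_assoc B A B, hBAB,
      ← mul_assoc B B A, hBBA, hmul2 B A, sub_smul, h2, one_smul]
    abel
end

section
/- Let z be a nonzero scalar. In any associative unital algebra over a field of characteristic 0, suppose 𝒜 and ℬ satisfy 𝒜² = z𝒜, ℬ² = 2ℬ, and ℬ𝒜ℬ = ℬ. Define G = zℬ + 2𝒜 − (𝒜ℬ + ℬ𝒜). Then G(G − 2z)(G + 1 − 2z) = 0. -/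
theorem btl_G_cubic {K : Type*} [Field K] [CharZero K]
    {R : Type*} [Ring R] [Algebra K R] (z : K) (hz : z ≠ 0) (A B : R)
    (hA : A * A = z • A) (hB : B * B = 2 * B) (hBAB : B * A * B = B) :
    (z • B + 2 * A - (A * B + B * A))
      * ((z • B + 2 * A - (A * B + B * A)) - (2 * z) • (1 : R))
      * ((z • B + 2 * A - (A * B + B * A)) + 1 - (2 * z) • (1 : R)) = 0 := by
  have hB' : B * B = (2:K) • B := by rw [hB, two_smul, two_mul]
  have hA1 : ∀ x : R, A * (A * x) = z • (A * x) := by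
    intro x; rw [← mul_assoc, hA, smul_mul_assoc]
  have hB1 : ∀ x : R, B * (B * x) = (2:K) • (B * x) := by
    intro x; rw [← mul_assoc, hB', smul_mul_assoc]
  have hBAB' : B * (A * B) = B := by rw [← mul_assoc, hBAB]
  have hBAB1 : ∀ x : R, B * (A * (B * x)) = B * x := by
    intro x; rw [← mul_assoc, ← mul_assoc, hBAB]
  have h2 : (2:R) * A = (2:K) • A := by rw [two_smul, two_mul]
  rw [h2]
  simp only [mul_add, add_mul, mul_sub, sub_mul, mul_one, one_mul,
    smul_mul_assoc, mul_smul_comm, smul_smul, mul_assoc,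
    hA, hB', hBAB', hA1, hB1, hBAB1]
  module
end

section
/- Let z be a nonzero scalar. In any associative unital algebra over a field of characteristic 0, suppose 𝒜 and ℬ satisfy 𝒜² = z𝒜, ℬ² = 2ℬ, and ℬ𝒜ℬ = ℬ. Then the subalgebra generated by 𝒜 and ℬ is spanned by the six elements 1, 𝒜, ℬ, 𝒜ℬ, ℬ𝒜, 𝒜ℬ𝒜; in particular its dimension is at most 6. -/
theorem btl_span {K : Type*} [Field K] [CharZero K]
    {R : Type*} [Ring R] [Algebra K R] (z : K) (hz : z ≠ 0) (A B : R)
    (hA : A * A = z • A) (hB : B * B = 2 * B) (hBAB : B * A * B = B) :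
    Subalgebra.toSubmodule (Algebra.adjoin K {A, B})
      ≤ Submodule.span K ({1, A, B, A * B, B * A, A * B * A} : Set R) ∧
    Module.rank K (Algebra.adjoin K {A, B} : Subalgebra K R) ≤ 6 := by
  set s : Set R := {1, A, B, A * B, B * A, A * B * A} with hs
  set p : Submodule K R := Submodule.span K s with hp
  have hB2 : B * B = (2 : K) • B := by
    rw [hB, Algebra.smul_def, map_ofNat]
  have hAAx : ∀ x : R, A * (A * x) = z • (A * x) := fun x => by
    rw [← mul_assoc, hA, smul_mul_assoc]
  have hBBx : ∀ x : R, B * (B * x) = (2 : K) • (B * x) := fun x => by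
    rw [← mul_assoc, hB2, smul_mul_assoc]
  have hBAB' : B * (A * B) = B := by rw [← mul_assoc, hBAB]
  have hBABx : ∀ x : R, B * (A * (B * x)) = B * x := fun x => by
    rw [← mul_assoc, ← mul_assoc, hBAB]
  have hmemgen : ∀ g ∈ s, g ∈ p := fun g hg => Submodule.subset_span hg
  have mem1 : (1 : R) ∈ p := hmemgen 1 (by simp [hs])
  have memA : A ∈ p := hmemgen A (by simp [hs])
  have memB : B ∈ p := hmemgen B (by simp [hs])
  have memAB : A * B ∈ p := hmemgen _ (by simp [hs])
  have memBA : B * A ∈ p := hmemgen _ (by simp [hs])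
  have memABA : A * B * A ∈ p := hmemgen _ (by simp [hs])
  have hmulgen : ∀ x ∈ s, ∀ y ∈ s, x * y ∈ p := by
    intro x hx y hy
    simp only [hs, Set.mem_insert_iff, Set.mem_singleton_iff] at hx hy
    rcases hx with rfl | rfl | rfl | rfl | rfl | rfl <;>
      rcases hy with rfl | rfl | rfl | rfl | rfl | rfl <;>
      (try simp only [one_mul, mul_one, mul_assoc, hAAx, hBBx, hBAB', hBABx, hA, hB2,
        mul_smul_comm, smul_mul_assoc]) <;>
      (repeat' apply Submodule.smul_mem) <;>
      (try simp only [← mul_assoc]) <;>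
      first
        | exact mem1 | exact memA | exact memB
        | exact memAB | exact memBA | exact memABA
  have hmul : ∀ x ∈ p, ∀ y ∈ p, x * y ∈ p := by
    intro x hx
    induction hx using Submodule.span_induction with
    | mem x hxs =>
        intro y hy
        induction hy using Submodule.span_induction with
        | mem y hys => exact hmulgen x hxs y hys
        | zero => simp only [mul_zero]; exact p.zero_mem
        | add a b _ _ ha hb => rw [mul_add]; exact p.add_mem ha hb
        | smul c a _ ha => rw [mul_smul_comm]; exact p.smul_mem c ha
    | zero => intro y hy; simp only [zero_mul]; exact p.zero_mem
    | add a b _ _ ha hb => intro y hy; rw [add_mul]; exact p.add_mem (ha y hy) (hb y hy)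
    | smul c a _ ha => intro y hy; rw [smul_mul_assoc]; exact p.smul_mem c (ha y hy)
  let S : Subalgebra K R := p.toSubalgebra mem1 (fun x y hx hy => hmul x hx y hy)
  have hadj : Algebra.adjoin K {A, B} ≤ S := by
    apply Algebra.adjoin_le
    rintro x (rfl | rfl)
    · exact memA
    · exact memB
  constructor
  · exact hadj
  · have h1 : Module.rank K (Algebra.adjoin K {A, B} : Subalgebra K R)
        ≤ Module.rank K p := by
      rw [← Subalgebra.rank_toSubmodule]
      exact Submodule.rank_mono hadj
    refine h1.trans ((rank_span_le s).trans ?_)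
    show Cardinal.mk ↥({1, A, B, A * B, B * A, A * B * A} : Set R) ≤ 6
    calc Cardinal.mk ↥({1, A, B, A * B, B * A, A * B * A} : Set R)
        ≤ Cardinal.mk ↥({A, B, A * B, B * A, A * B * A} : Set R) + 1 :=
          Cardinal.mk_insert_le
      _ ≤ (Cardinal.mk ↥({B, A * B, B * A, A * B * A} : Set R) + 1) + 1 :=
          add_le_add_left Cardinal.mk_insert_le 1
      _ ≤ ((Cardinal.mk ↥({A * B, B * A, A * B * A} : Set R) + 1) + 1) + 1 :=
          add_le_add_left (add_le_add_left Cardinal.mk_insert_le 1) 1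
      _ ≤ (((Cardinal.mk ↥({B * A, A * B * A} : Set R) + 1) + 1) + 1) + 1 :=
          add_le_add_left (add_le_add_left (add_le_add_left Cardinal.mk_insert_le 1) 1) 1
      _ ≤ ((((Cardinal.mk ↥({A * B * A} : Set R) + 1) + 1) + 1) + 1) + 1 :=
          add_le_add_left (add_le_add_left (add_le_add_left
            (add_le_add_left Cardinal.mk_insert_le 1) 1) 1) 1
      _ = ((((1 + 1) + 1) + 1) + 1) + 1 := by rw [Cardinal.mk_singleton]
      _ = 6 := by norm_num
end

section
/- In the one-boundary Brauer algebra bB with generators e₀, e₁, s₁ subject to e₀² = (3/2)e₀, s₁² = 1, e₁² = 3e₁, s₁e₁ = e₁s₁ = e₁, e₁e₀s₁ = e₁ − e₁e₀, s₁e₀e₁ = e₁ − e₀e₁, 4e₀s₁e₀ = 1 + 2e₀ + e₁ − s₁ + 2(e₀(s₁−e₁) + (s₁−e₁)e₀) − 2s₁e₀s₁, and 4e₀e₁e₀ = −1 + 2e₀ + s₁ − e₁ − 2(e₀(s₁−e₁) + (s₁−e₁)e₀) + 2s₁e₀s₁, the relation e₁e₀e₁ = (3/2)e₁ holds. -/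
theorem one_boundary_brauer_e1e0e1 {R : Type*} [Ring R] [Algebra ℚ R] (e₀ e₁ s₁ : R)
    (he0 : e₀ * e₀ = (3 / 2 : ℚ) • e₀) (hs1 : s₁ * s₁ = 1) (he1 : e₁ * e₁ = 3 * e₁)
    (hse : s₁ * e₁ = e₁) (hes : e₁ * s₁ = e₁)
    (h1 : e₁ * e₀ * s₁ = e₁ - e₁ * e₀) (h2 : s₁ * e₀ * e₁ = e₁ - e₀ * e₁)
    (h3 : 4 * (e₀ * s₁ * e₀)
      = 1 + 2 * e₀ + e₁ - s₁ + 2 * (e₀ * (s₁ - e₁) + (s₁ - e₁) * e₀) - 2 * (s₁ * e₀ * s₁))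
    (h4 : 4 * (e₀ * e₁ * e₀)
      = -1 + 2 * e₀ + s₁ - e₁ - 2 * (e₀ * (s₁ - e₁) + (s₁ - e₁) * e₀) + 2 * (s₁ * e₀ * s₁)) :
    e₁ * e₀ * e₁ = (3 / 2 : ℚ) • e₁ := by
  have he0' : 2 * (e₀ * e₀) = 3 * e₀ := by
    rw [he0, Algebra.smul_def, ← mul_assoc,
      show (2 : R) * algebraMap ℚ R (3 / 2) = 3 by
        rw [show (2 : R) = algebraMap ℚ R 2 from (map_ofNat _ 2).symm, ← map_mul,
          show (2 * (3 / 2) : ℚ) = 3 by norm_num]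
        exact map_ofNat _ 3]
  have step2 : 2 * (e₁ * (e₀ * s₁ * e₀) * e₁) = -(e₁ * e₀ * e₁) := by
    linear_combination (norm := noncomm_ring) 2 * h1 * (e₀ * e₁) - e₁ * he0' * e₁
  have hY : 8 * (e₁ * (e₀ * e₁ * e₀) * e₁) = 12 * (e₁ * e₀ * e₁) := by
    linear_combination (norm := noncomm_ring) 2 * (e₁ * h3 * e₁) + 2 * (e₁ * h4 * e₁) - 4 * step2
  have hA : 4 * (e₁ * (e₀ * e₁ * e₀) * e₁) = 16 * (e₁ * e₀ * e₁) - 15 * e₁ := by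
    linear_combination (norm := noncomm_ring) e₁ * h4 * e₁ + hes * e₁ - he1 * e₁
      + 2 * ((e₁ * e₀) * he1) - 2 * (e₁ * h2) + 2 * (he1 * (e₀ * e₁))
      + 2 * (hes * (e₀ * s₁ * e₁)) - 5 * he1
  have key : 20 * (e₁ * e₀ * e₁) = 30 * e₁ := by
    linear_combination (norm := noncomm_ring) hY - 2 * hA
  have h20 : (20 : ℚ) • (e₁ * e₀ * e₁) = 20 * (e₁ * e₀ * e₁) := by
    rw [Algebra.smul_def, show algebraMap ℚ R 20 = 20 from map_ofNat _ 20]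
  have h30 : (30 : R) * e₁ = (30 : ℚ) • e₁ := by
    rw [Algebra.smul_def, show algebraMap ℚ R 30 = 30 from map_ofNat _ 30]
  have e20 : (20 : ℚ) • (e₁ * e₀ * e₁) = (30 : ℚ) • e₁ := by rw [h20, key, h30]
  calc e₁ * e₀ * e₁ = ((1 / 20 : ℚ) * 20) • (e₁ * e₀ * e₁) := by norm_num
    _ = (1 / 20 : ℚ) • ((20 : ℚ) • (e₁ * e₀ * e₁)) := by rw [mul_smul]
    _ = (1 / 20 : ℚ) • ((30 : ℚ) • e₁) := by rw [e20]
    _ = (3 / 2 : ℚ) • e₁ := by rw [smul_smul]; norm_num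
end

section
/- Let x, y, c be scalars in a field of characteristic 0 with x ≠ 1 and x ≠ −1. In any associative unital algebra, suppose A and B satisfy A² = 2x²A − x²(x²−1), B² = 2y²B − y²(y²−1), ABA = (x²−1)(AB+BA) − x²(x²−1)B + (y²−x²+c+1/4)A + (x²−1)(x²+y²−c−1/4), and BAB = (y²−1)(AB+BA) − y²(y²−1)A + (x²−y²+c+1/4)B + (y²−1)(x²+y²−c−1/4). Then BA lies in the linear span of {1, A, B, AB}, and consequently the subalgebra generated by A and B is spanned by {1, A, B, AB}, hence has dimension at most 4. -/
theorem H_jkc_dim_le_four {K : Type*} [Field K] [CharZero K]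
    {R : Type*} [Ring R] [Algebra K R] (x y c : K) (hx1 : x ≠ 1) (hx2 : x ≠ -1) (A B : R)
    (hA : A * A = (2 * x ^ 2) • A - (x ^ 2 * (x ^ 2 - 1)) • (1 : R))
    (hB : B * B = (2 * y ^ 2) • B - (y ^ 2 * (y ^ 2 - 1)) • (1 : R))
    (hABA : A * B * A = (x ^ 2 - 1) • (A * B + B * A) - (x ^ 2 * (x ^ 2 - 1)) • B
      + (y ^ 2 - x ^ 2 + c + 1 / 4) • A
      + ((x ^ 2 - 1) * (x ^ 2 + y ^ 2 - c - 1 / 4)) • (1 : R))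
    (hBAB : B * A * B = (y ^ 2 - 1) • (A * B + B * A) - (y ^ 2 * (y ^ 2 - 1)) • A
      + (x ^ 2 - y ^ 2 + c + 1 / 4) • B
      + ((y ^ 2 - 1) * (x ^ 2 + y ^ 2 - c - 1 / 4)) • (1 : R)) :
    B * A ∈ Submodule.span K ({1, A, B, A * B} : Set R) ∧
    Subalgebra.toSubmodule (Algebra.adjoin K {A, B})
      ≤ Submodule.span K ({1, A, B, A * B} : Set R) ∧
    Module.rank K (Algebra.adjoin K {A, B} : Subalgebra K R) ≤ 4 := by
  -- Step 1: an explicit formula for B * A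
  have hBA : B * A = (2 * y ^ 2) • A + (2 * x ^ 2) • B - A * B
      - (2 * x ^ 2 * y ^ 2 + x ^ 2 + y ^ 2 - c - 1 / 4) • (1 : R) := by
    have ht : x ^ 2 - 1 ≠ 0 := by
      intro h
      rcases mul_eq_zero.1 (show (x - 1) * (x + 1) = 0 by linear_combination h) with h' | h'
      · exact hx1 (sub_eq_zero.1 h')
      · exact hx2 (eq_neg_of_add_eq_zero_left h')
    apply smul_right_injective R ht
    have e : A * (A * B * A) = A * ((x ^ 2 - 1) • (A * B + B * A) - (x ^ 2 * (x ^ 2 - 1)) • B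
        + (y ^ 2 - x ^ 2 + c + 1 / 4) • A
        + ((x ^ 2 - 1) * (x ^ 2 + y ^ 2 - c - 1 / 4)) • (1 : R)) := by rw [← hABA]
    have lhs : A * (A * B * A) = (2 * x ^ 2) • (A * B * A) - (x ^ 2 * (x ^ 2 - 1)) • (B * A) := by
      have : A * (A * B * A) = (A * A) * (B * A) := by noncomm_ring
      rw [this, hA, sub_mul, smul_mul_assoc, smul_mul_assoc, one_mul, ← mul_assoc]
    have rhs : A * ((x ^ 2 - 1) • (A * B + B * A) - (x ^ 2 * (x ^ 2 - 1)) • B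
        + (y ^ 2 - x ^ 2 + c + 1 / 4) • A
        + ((x ^ 2 - 1) * (x ^ 2 + y ^ 2 - c - 1 / 4)) • (1 : R))
        = (x ^ 2 - 1) • ((A * A) * B + A * B * A) - (x ^ 2 * (x ^ 2 - 1)) • (A * B)
        + (y ^ 2 - x ^ 2 + c + 1 / 4) • (A * A)
        + ((x ^ 2 - 1) * (x ^ 2 + y ^ 2 - c - 1 / 4)) • A := by
      simp only [mul_add, mul_sub, mul_smul_comm, mul_one, mul_assoc]
    rw [lhs, rhs, hA, hABA] at e
    simp only [sub_mul, smul_mul_assoc, one_mul] at e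
    linear_combination (norm := module) e
  set sp : Submodule K R := Submodule.span K ({1, A, B, A * B} : Set R) with hsp
  have mem1 : (1 : R) ∈ sp := Submodule.subset_span (by simp)
  have memA : A ∈ sp := Submodule.subset_span (by simp)
  have memB : B ∈ sp := Submodule.subset_span (by simp)
  have memAB : A * B ∈ sp := Submodule.subset_span (by simp)
  have memBA : B * A ∈ sp := by
    rw [hBA]
    exact sub_mem (sub_mem (add_mem (Submodule.smul_mem _ _ memA) (Submodule.smul_mem _ _ memB))
      memAB) (Submodule.smul_mem _ _ mem1)
  -- products of generators with A and B
  have pAA : A * A ∈ sp := by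
    rw [hA]; exact sub_mem (Submodule.smul_mem _ _ memA) (Submodule.smul_mem _ _ mem1)
  have pBB : B * B ∈ sp := by
    rw [hB]; exact sub_mem (Submodule.smul_mem _ _ memB) (Submodule.smul_mem _ _ mem1)
  have pABA : A * B * A ∈ sp := by
    rw [hABA]
    exact add_mem (add_mem (sub_mem (Submodule.smul_mem _ _ (add_mem memAB memBA))
      (Submodule.smul_mem _ _ memB)) (Submodule.smul_mem _ _ memA)) (Submodule.smul_mem _ _ mem1)
  have pABB : A * B * B ∈ sp := by
    have : A * B * B = (2 * y ^ 2) • (A * B) - (y ^ 2 * (y ^ 2 - 1)) • A := by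
      rw [mul_assoc, hB, mul_sub, mul_smul_comm, mul_smul_comm, mul_one]
    rw [this]
    exact sub_mem (Submodule.smul_mem _ _ memAB) (Submodule.smul_mem _ _ memA)
  -- right multiplication by A and by B preserves sp
  have mulA : ∀ r ∈ sp, r * A ∈ sp := by
    intro r hr
    induction hr using Submodule.span_induction with
    | mem g hg =>
      rcases hg with h | h | h | h
      · rw [h, one_mul]; exact memA
      · rw [h]; exact pAA
      · rw [h]; exact memBA
      · rw [Set.mem_singleton_iff.1 h]; exact pABA
    | zero => rw [zero_mul]; exact zero_mem sp
    | add p q hp hq ihp ihq => rw [add_mul]; exact add_mem ihp ihq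
    | smul k p hp ihp => rw [smul_mul_assoc]; exact Submodule.smul_mem _ _ ihp
  have mulB : ∀ r ∈ sp, r * B ∈ sp := by
    intro r hr
    induction hr using Submodule.span_induction with
    | mem g hg =>
      rcases hg with h | h | h | h
      · rw [h, one_mul]; exact memB
      · rw [h]; exact memAB
      · rw [h]; exact pBB
      · rw [Set.mem_singleton_iff.1 h]; exact pABB
    | zero => rw [zero_mul]; exact zero_mem sp
    | add p q hp hq ihp ihq => rw [add_mul]; exact add_mem ihp ihq
    | smul k p hp ihp => rw [smul_mul_assoc]; exact Submodule.smul_mem _ _ ihp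
  -- sp is closed under multiplication
  have hmul : ∀ p q : R, p ∈ sp → q ∈ sp → p * q ∈ sp := by
    intro p q hp hq
    induction hq using Submodule.span_induction with
    | mem g hg =>
      rcases hg with h | h | h | h
      · rw [h, mul_one]; exact hp
      · rw [h]; exact mulA p hp
      · rw [h]; exact mulB p hp
      · rw [Set.mem_singleton_iff.1 h, ← mul_assoc]; exact mulB _ (mulA p hp)
    | zero => rw [mul_zero]; exact zero_mem sp
    | add u v hu hv ihu ihv => rw [mul_add]; exact add_mem ihu ihv
    | smul k u hu ihu => rw [mul_smul_comm]; exact Submodule.smul_mem _ _ ihu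
  -- sp as a subalgebra
  have hle : Subalgebra.toSubmodule (Algebra.adjoin K {A, B}) ≤ sp := by
    have hadj : Algebra.adjoin K {A, B} ≤ sp.toSubalgebra mem1 hmul := by
      apply Algebra.adjoin_le
      intro z hz
      rcases hz with h | h
      · rw [h]; exact memA
      · rw [Set.mem_singleton_iff.1 h]; exact memB
    exact fun z hz => hadj hz
  refine ⟨memBA, hle, ?_⟩
  -- rank bound
  have h1 : Module.rank K (Algebra.adjoin K {A, B} : Subalgebra K R)
      = Module.rank K (Subalgebra.toSubmodule (Algebra.adjoin K {A, B})) :=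
    (Subalgebra.rank_toSubmodule _).symm
  rw [h1]
  refine le_trans (Submodule.rank_mono hle) (le_trans (rank_span_le _) ?_)
  calc (Cardinal.mk ({1, A, B, A * B} : Set R))
      ≤ Cardinal.mk ({A, B, A * B} : Set R) + 1 := Cardinal.mk_insert_le
    _ ≤ (Cardinal.mk ({B, A * B} : Set R) + 1) + 1 :=
        add_le_add_left Cardinal.mk_insert_le 1
    _ ≤ ((Cardinal.mk ({A * B} : Set R) + 1) + 1) + 1 :=
        add_le_add_left (add_le_add_left Cardinal.mk_insert_le 1) 1
    _ = ((1 + 1) + 1) + 1 := by rw [Cardinal.mk_singleton]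
    _ = 4 := by norm_num
end

section
/- Let x, c be scalars in a field of characteristic 0 and set z² = x² − (c + 1/4) for some scalar z. In any associative unital algebra, suppose A and B satisfy A² = 2x²A − x²(x²−1), B² = 2x²B − x²(x²−1), ABA = (x²−1)(AB+BA) − x²(x²−1)B + (c+1/4)A + (x²−1)(2x²−c−1/4), and BAB = (x²−1)(AB+BA) − x²(x²−1)A + (c+1/4)B + (x²−1)(2x²−c−1/4). Then the elements 𝒜 = A + z − x² and ℬ = B + z − x² satisfy 𝒜² = 2z𝒜 + (x² − z²), ℬ² = 2zℬ + (x² − z²), and the braid relation 𝒜ℬ𝒜 = ℬ𝒜ℬ. -/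
theorem H_jjc_braid {K : Type*} [Field K] [CharZero K]
    {R : Type*} [Ring R] [Algebra K R] (x c z : K)
    (hz : z ^ 2 = x ^ 2 - (c + 1 / 4)) (A B : R)
    (hA : A * A = (2 * x ^ 2) • A - (x ^ 2 * (x ^ 2 - 1)) • (1 : R))
    (hB : B * B = (2 * x ^ 2) • B - (x ^ 2 * (x ^ 2 - 1)) • (1 : R))
    (hABA : A * B * A = (x ^ 2 - 1) • (A * B + B * A) - (x ^ 2 * (x ^ 2 - 1)) • B
      + (c + 1 / 4) • A + ((x ^ 2 - 1) * (2 * x ^ 2 - c - 1 / 4)) • (1 : R))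
    (hBAB : B * A * B = (x ^ 2 - 1) • (A * B + B * A) - (x ^ 2 * (x ^ 2 - 1)) • A
      + (c + 1 / 4) • B + ((x ^ 2 - 1) * (2 * x ^ 2 - c - 1 / 4)) • (1 : R)) :
    (A + (z - x ^ 2) • (1 : R)) * (A + (z - x ^ 2) • (1 : R))
      = (2 * z) • (A + (z - x ^ 2) • (1 : R)) + (x ^ 2 - z ^ 2) • (1 : R) ∧
    (B + (z - x ^ 2) • (1 : R)) * (B + (z - x ^ 2) • (1 : R))
      = (2 * z) • (B + (z - x ^ 2) • (1 : R)) + (x ^ 2 - z ^ 2) • (1 : R) ∧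
    (A + (z - x ^ 2) • (1 : R)) * (B + (z - x ^ 2) • (1 : R)) * (A + (z - x ^ 2) • (1 : R))
      = (B + (z - x ^ 2) • (1 : R)) * (A + (z - x ^ 2) • (1 : R)) * (B + (z - x ^ 2) • (1 : R)) := by
  have key : ∀ X : R, X * X = (2 * x ^ 2) • X - (x ^ 2 * (x ^ 2 - 1)) • (1 : R) →
      (X + (z - x ^ 2) • (1 : R)) * (X + (z - x ^ 2) • (1 : R))
        = (2 * z) • (X + (z - x ^ 2) • (1 : R)) + (x ^ 2 - z ^ 2) • (1 : R) := by
    intro X hX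
    simp only [mul_add, add_mul, smul_mul_assoc, mul_smul_comm, one_mul, mul_one, smul_smul, hX]
    module
  refine ⟨key A hA, key B hB, ?_⟩
  simp only [mul_add, add_mul, smul_mul_assoc, mul_smul_comm, one_mul, mul_one, smul_smul,
    hA, hB, hABA, hBAB]
  match_scalars <;> first | ring1 | linear_combination -hz | linear_combination -2 * hz | linear_combination 3 * hz | linear_combination 2 * hz | linear_combination hz
end

section
/- In any associative unital ℚ-algebra, suppose A, B and a central element G satisfy: A² = 2A, B² = 2B, (G−1)(G−4) = 0, G = AB + BA − 2A − 2B + 4, GA = 2(AB+BA) − 3A − 4B + 6, GB = 2(AB+BA) − 4A − 3B + 6, ABA = GA, BAB = GB. Then A and B satisfy ABA = 2(AB+BA) − 3A − 4B + 6 and BAB = 2(AB+BA) − 4A − 3B + 6; conversely, if A and B satisfy these last two relations together with A² = 2A and B² = 2B, then setting G := AB + BA − 2A − 2B + 4, all of the former relations hold (with G central). -/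
theorem racah_TL_presentations_equiv {R : Type*} [Ring R] [Algebra ℚ R] :
    (∀ A B G : R,
      G * A = A * G → G * B = B * G →
      A * A = 2 * A → B * B = 2 * B →
      (G - 1) * (G - 4) = 0 →
      G = A * B + B * A - 2 * A - 2 * B + 4 →
      G * A = 2 * (A * B + B * A) - 3 * A - 4 * B + 6 →
      G * B = 2 * (A * B + B * A) - 4 * A - 3 * B + 6 →
      A * B * A = G * A → B * A * B = G * B →
      A * B * A = 2 * (A * B + B * A) - 3 * A - 4 * B + 6 ∧
      B * A * B = 2 * (A * B + B * A) - 4 * A - 3 * B + 6) ∧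
    (∀ A B : R,
      A * A = 2 * A → B * B = 2 * B →
      A * B * A = 2 * (A * B + B * A) - 3 * A - 4 * B + 6 →
      B * A * B = 2 * (A * B + B * A) - 4 * A - 3 * B + 6 →
      let G := A * B + B * A - 2 * A - 2 * B + 4
      G * A = A * G ∧ G * B = B * G ∧
      (G - 1) * (G - 4) = 0 ∧
      G * A = 2 * (A * B + B * A) - 3 * A - 4 * B + 6 ∧
      G * B = 2 * (A * B + B * A) - 4 * A - 3 * B + 6 ∧
      A * B * A = G * A ∧ B * A * B = G * B) := by
  constructor
  · intro A B G _ _ _ _ _ _ h7 h8 h9 h10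
    exact ⟨h9.trans h7, h10.trans h8⟩
  · intro A B hA hB hABA hBAB G
    have hGdef : G = A * B + B * A - 2 * A - 2 * B + 4 := rfl
    clear_value G
    have hGA : G * A = A * B * A := by
      rw [hGdef]
      calc (A * B + B * A - 2 * A - 2 * B + 4) * A
          = A * B * A + B * (A * A) - 2 * (A * A) - 2 * (B * A) + 4 * A := by
            noncomm_ring
        _ = A * B * A + B * (2 * A) - 2 * (2 * A) - 2 * (B * A) + 4 * A := by rw [hA]
        _ = A * B * A := by noncomm_ring
    have hAG : A * G = A * B * A := by
      rw [hGdef]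
      calc A * (A * B + B * A - 2 * A - 2 * B + 4)
          = (A * A) * B + A * B * A - 2 * (A * A) - 2 * (A * B) + 4 * A := by
            noncomm_ring
        _ = (2 * A) * B + A * B * A - 2 * (2 * A) - 2 * (A * B) + 4 * A := by rw [hA]
        _ = A * B * A := by noncomm_ring
    have hGB : G * B = B * A * B := by
      rw [hGdef]
      calc (A * B + B * A - 2 * A - 2 * B + 4) * B
          = A * (B * B) + B * A * B - 2 * (A * B) - 2 * (B * B) + 4 * B := by
            noncomm_ring
        _ = A * (2 * B) + B * A * B - 2 * (A * B) - 2 * (2 * B) + 4 * B := by rw [hB]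
        _ = B * A * B := by noncomm_ring
    have hBG : B * G = B * A * B := by
      rw [hGdef]
      calc B * (A * B + B * A - 2 * A - 2 * B + 4)
          = B * A * B + (B * B) * A - 2 * (B * A) - 2 * (B * B) + 4 * B := by
            noncomm_ring
        _ = B * A * B + (2 * B) * A - 2 * (B * A) - 2 * (2 * B) + 4 * B := by rw [hB]
        _ = B * A * B := by noncomm_ring
    have e1 : A * B * A * B = A * B + 2 * (B * A * B) - 2 * B := by
      rw [show A * B * A * B = (A * B * A) * B from by noncomm_ring, hABA]
      calc (2 * (A * B + B * A) - 3 * A - 4 * B + 6) * B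
          = 2 * (A * (B * B)) + 2 * (B * A * B) - 3 * (A * B) - 4 * (B * B) + 6 * B := by
            noncomm_ring
        _ = 2 * (A * (2 * B)) + 2 * (B * A * B) - 3 * (A * B) - 4 * (2 * B) + 6 * B := by
            rw [hB]
        _ = A * B + 2 * (B * A * B) - 2 * B := by noncomm_ring
    have e2 : B * A * B * A = B * A + 2 * (A * B * A) - 2 * A := by
      rw [show B * A * B * A = (B * A * B) * A from by noncomm_ring, hBAB]
      calc (2 * (A * B + B * A) - 4 * A - 3 * B + 6) * A
          = 2 * (A * B * A) + 2 * (B * (A * A)) - 4 * (A * A) - 3 * (B * A) + 6 * A := by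
            noncomm_ring
        _ = 2 * (A * B * A) + 2 * (B * (2 * A)) - 4 * (2 * A) - 3 * (B * A) + 6 * A := by
            rw [hA]
        _ = B * A + 2 * (A * B * A) - 2 * A := by noncomm_ring
    have hGG : G * G = 5 * G - 4 := by
      calc G * G = G * (A * B + B * A - 2 * A - 2 * B + 4) := by rw [← hGdef]
        _ = (G * A) * B + (G * B) * A - 2 * (G * A) - 2 * (G * B) + 4 * G := by
            noncomm_ring
        _ = (A * B * A) * B + (B * A * B) * A - 2 * (A * B * A) - 2 * (B * A * B) + 4 * G := by
            rw [hGA, hGB]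
        _ = A * B * A * B + B * A * B * A - 2 * (A * B * A) - 2 * (B * A * B) + 4 * G := by
            noncomm_ring
        _ = (A * B + 2 * (B * A * B) - 2 * B) + (B * A + 2 * (A * B * A) - 2 * A)
              - 2 * (A * B * A) - 2 * (B * A * B) + 4 * G := by rw [e1, e2]
        _ = (A * B + B * A - 2 * A - 2 * B + 4) + 4 * G - 4 := by noncomm_ring
        _ = 5 * G - 4 := by rw [← hGdef]; noncomm_ring
    refine ⟨hGA.trans hAG.symm, hGB.trans hBG.symm, ?_, hGA.trans hABA, hGB.trans hBAB,
      hGA.symm, hGB.symm⟩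
    calc (G - 1) * (G - 4) = G * G - 5 * G + 4 * 1 := by noncomm_ring
      _ = (5 * G - 4) - 5 * G + 4 * 1 := by rw [hGG]
      _ = 0 := by rw [mul_one]; abel
end

section
/- Let z ≠ 0, 2/3, 2 be a scalar in a field of characteristic 0. In any associative unital algebra, suppose 𝒜, ℬ and a central element G satisfy 𝒜² = z𝒜, ℬ² = 2ℬ, and 2𝒜ℬ𝒜 = (3z−2)((𝒜ℬ+ℬ𝒜) − zℬ) + 2(2−z)𝒜 + (3z−2−2𝒜)G. Then G = zℬ + 2𝒜 − (𝒜ℬ + ℬ𝒜). -/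
theorem btl_G_determined {K : Type*} [Field K] [CharZero K]
    {R : Type*} [Ring R] [Algebra K R] (z : K)
    (hz0 : z ≠ 0) (hz23 : z ≠ 2 / 3) (hz2 : z ≠ 2) (A B G : R)
    (hGA : G * A = A * G) (hGB : G * B = B * G)
    (hA : A * A = z • A) (hB : B * B = 2 * B)
    (hrel : 2 * (A * B * A)
      = (3 * z - 2) • ((A * B + B * A) - z • B) + (2 * (2 - z)) • A
        + ((3 * z - 2) • (1 : R) - 2 * A) * G) :
    G = z • B + 2 * A - (A * B + B * A) := by
  have hz2' : z - 2 ≠ 0 := sub_ne_zero.mpr hz2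
  have hz32 : 3 * z - 2 ≠ 0 := by
    intro h
    exact hz23 (by field_simp; linear_combination h)
  have hs2 : ∀ x : R, (2 : K) • x = 2 * x := fun x => by
    rw [show (2:K) = (1:K) + 1 by norm_num, add_smul, one_smul, two_mul]
  have hAAB : A * (A * B) = z • (A * B) := by
    rw [← mul_assoc, hA, smul_mul_assoc]
  have hAABA : A * (A * B * A) = z • (A * B * A) := by
    rw [show A * (A * B * A) = (A * (A * B)) * A by noncomm_ring, hAAB, smul_mul_assoc]
  have hAAG : A * (A * G) = z • (A * G) := by
    rw [← mul_assoc, hA, smul_mul_assoc]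
  have hrel' : 2 * (A * B * A)
      = (3 * z - 2) • (A * B) + (3 * z - 2) • (B * A) - ((3 * z - 2) * z) • B
        + (2 * (2 - z)) • A + (3 * z - 2) • G - 2 * (A * G) := by
    rw [hrel]
    simp only [smul_sub, smul_add, smul_smul, sub_mul, smul_mul_assoc, one_mul, mul_assoc]
    abel
  have h2 : A * (2 * (A * B * A)) = A * ((3 * z - 2) • (A * B) + (3 * z - 2) • (B * A)
      - ((3 * z - 2) * z) • B + (2 * (2 - z)) • A + (3 * z - 2) • G - 2 * (A * G)) := by
    rw [← hrel']
  simp only [mul_add, mul_sub, mul_smul_comm, two_mul, ← mul_assoc] at h2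
  simp only [hA, add_mul, smul_mul_assoc] at h2
  -- h2 is now a linear combination of atoms
  have key : (z - 2) • (A * G) = (z - 2) • ((2 * z) • A - A * B * A) := by
    linear_combination (norm := module) -h2
  have hAG : A * G = (2 * z) • A - A * B * A := by
    have := congrArg (fun x => (z - 2)⁻¹ • x) key
    simpa [smul_smul, inv_mul_cancel₀ hz2'] using this
  have hrel'' : (2 : K) • (A * B * A)
      = (3 * z - 2) • (A * B) + (3 * z - 2) • (B * A) - ((3 * z - 2) * z) • B
        + (2 * (2 - z)) • A + (3 * z - 2) • G - (2 : K) • (A * G) := by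
    rw [hs2, hs2]; exact hrel'
  have h4 : (3 * z - 2) • G = (3 * z - 2) • (z • B + (2 : K) • A - (A * B + B * A)) := by
    linear_combination (norm := module) (2 : K) • hAG - hrel''
  have h5 := congrArg (fun x => (3 * z - 2)⁻¹ • x) h4
  simp only [smul_smul, inv_mul_cancel₀ hz32, one_smul] at h5
  rw [h5, hs2]
end
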